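/- arXiv:1705.02029 — 4 statements merged into one kernel-verified Lean document; each statement's English description precedes it below -/
import Mathlib

section
/- Let X be a closed convex set in a real inner product space E, let f : X → ℝ be convex, and let d : X → ℝ be a continuously differentiable distance generating function that is 1-strongly convex with respect to the norm ‖·‖ on E, with Bregman divergence V(x,y) = d(y) − d(x) − ⟨∇d(x), y − x⟩. Fix x^i ∈ X, a subgradient ∇f(x^i) of f at x^i, and a stepsize h_i > 0, and let x^{i+1} = argmin_{u∈X} { ⟨h_i ∇f(x^i), u⟩ + V(x^i, u) }. Then for every x ∈ X it holds that h_i ( f(x^i) − f(x) ) ≤ (h_i²/2) ‖∇f(x^i)‖² + V(x^i, x) − V(x^{i+1}, x). -/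
/-!
The first-order optimality condition for `xnext`, rewritten by the three-point identity of the
Bregman divergence, bounds `h ⟪gf, xnext - x⟫` by `V xi x - V xnext x - V xi xnext`. The remaining
term `h ⟪gf, xi - xnext⟫` is absorbed by Young's inequality together with the strong-convexity
bound `‖xnext - xi‖ ^ 2 / 2 ≤ V xi xnext`, and the subgradient inequality finishes.
-/

open scoped RealInnerProductSpace

open InnerProductSpace

section

variable {E : Type*} [NormedAddCommGroup E] [InnerProductSpace ℝ E]

def bregman (d : E → ℝ) (Gd : E → E) (x y : E) : ℝ :=
  d y - d x - ⟪Gd x, y - x⟫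

theorem bregman_sub_bregman_sub_bregman (d : E → ℝ) (Gd : E → E) (x y z : E) :
    bregman d Gd x z - bregman d Gd y z - bregman d Gd x y = ⟪Gd y - Gd x, z - y⟫ := by
  simp only [bregman, inner_sub_left, inner_sub_right]
  ring

theorem real_inner_le_sq_norm_add_sq_norm_div_two (a b : E) :
    ⟪a, b⟫ ≤ ‖a‖ ^ 2 / 2 + ‖b‖ ^ 2 / 2 := by
  nlinarith [norm_sub_sq_real a b, sq_nonneg ‖a - b‖]

section
variable [CompleteSpace E]

theorem HasGradientAt.hasDerivAt_comp_add_smul {d : E → ℝ} {g p v : E} {t : ℝ}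
    (hd : HasGradientAt d g (p + t • v)) :
    HasDerivAt (fun s : ℝ => d (p + s • v)) ⟪g, v⟫ t := by
  have hline : HasDerivAt (fun s : ℝ => p + s • v) v t :=
    ((hasDerivAt_id t).smul_const v).const_add p |>.congr_deriv (one_smul ℝ v)
  have := hd.hasFDerivAt.comp_hasDerivAt t hline
  simp only [toDual_apply_apply] at this
  exact this

theorem hasGradientAt_inner_add_bregman {d : E → ℝ} {Gd : E → E} {y : E}
    (hd : HasGradientAt d (Gd y) y) (c x : E) :
    HasGradientAt (fun u => ⟪c, u⟫ + bregman d Gd x u) (c + Gd y - Gd x) y := by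
  have hlin : ∀ a : E, HasFDerivAt (fun u => ⟪a, u⟫) (toDual ℝ E a) y := fun a =>
    (toDual ℝ E a).hasFDerivAt
  rw [hasGradientAt_iff_hasFDerivAt, map_sub, map_add]
  refine (((hlin c).add hd.hasFDerivAt).sub (hlin (Gd x))).add_const (⟪Gd x, x⟫ - d x)
    |>.congr_of_eventuallyEq (Filter.Eventually.of_forall fun u => ?_)
  simp only [bregman, inner_sub_right, Pi.add_apply, Pi.sub_apply]
  ring

theorem inner_gradient_nonneg_of_isMinOn {g : E → ℝ} {G x y : E} {X : Set E} (hX : Convex ℝ X)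
    (hmin : IsMinOn g X x) (hg : HasGradientAt g G x) (hx : x ∈ X) (hy : y ∈ X) :
    0 ≤ ⟪G, y - x⟫ := by
  simpa using hmin.localize.hasFDerivWithinAt_nonneg hg.hasFDerivAt.hasFDerivWithinAt
    (sub_mem_posTangentConeAt_of_segment_subset (hX.segment_subset hx hy))

theorem sq_norm_sub_div_two_le_bregman {X : Set E} (hX : Convex ℝ X) {d : E → ℝ} {Gd : E → E}
    (hd : ∀ x ∈ X, HasGradientAt d (Gd x) x)
    (hstrong : ∀ x ∈ X, ∀ y ∈ X, ‖x - y‖ ^ 2 ≤ ⟪Gd x - Gd y, x - y⟫)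
    {x y : E} (hx : x ∈ X) (hy : y ∈ X) :
    ‖y - x‖ ^ 2 / 2 ≤ bregman d Gd x y := by
  set v := y - x
  have hmem : ∀ t ∈ Set.Icc (0 : ℝ) 1, x + t • v ∈ X := fun t ht => hX.add_smul_sub_mem hx hy ht
  set φ : ℝ → ℝ := fun t => d (x + t • v) - t * ⟪Gd x, v⟫ - t ^ 2 / 2 * ‖v‖ ^ 2
  have hφ : ∀ t ∈ Set.Icc (0 : ℝ) 1,
      HasDerivAt φ (⟪Gd (x + t • v), v⟫ - ⟪Gd x, v⟫ - t * ‖v‖ ^ 2) t := fun t ht => by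
    have hsq : HasDerivAt (fun s : ℝ => s ^ 2 / 2 * ‖v‖ ^ 2) (t * ‖v‖ ^ 2) t :=
      ((hasDerivAt_pow 2 t).div_const 2).mul_const (‖v‖ ^ 2) |>.congr_deriv (by norm_num)
    exact ((hd _ (hmem t ht)).hasDerivAt_comp_add_smul.sub
      ((hasDerivAt_id t).mul_const _ |>.congr_deriv (one_mul _))).sub hsq
  have hmono : MonotoneOn φ (Set.Icc 0 1) := by
    refine monotoneOn_of_hasDerivWithinAt_nonneg (convex_Icc 0 1)
      (fun t ht => (hφ t ht).continuousAt.continuousWithinAt)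
      (fun t ht => (hφ t (interior_subset ht)).hasDerivWithinAt) fun t ht => ?_
    rw [interior_Icc] at ht
    -- `t` times the derivative is the strong-monotonicity gap between `x + t • v` and `x`
    have key := hstrong _ (hmem t (Set.Ioo_subset_Icc_self ht)) x hx
    rw [add_sub_cancel_left, inner_smul_right, norm_smul, mul_pow, Real.norm_of_nonneg ht.1.le,
      inner_sub_left] at key
    nlinarith [ht.1]
  have := hmono (Set.left_mem_Icc.2 zero_le_one) (Set.right_mem_Icc.2 zero_le_one) zero_le_one
  simp only [φ, v, zero_smul, add_zero, one_smul, add_sub_cancel] at this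
  simp only [bregman]
  linarith

end

end

theorem mirror_descent_step_general
    {E : Type*} [NormedAddCommGroup E] [InnerProductSpace ℝ E] [CompleteSpace E]
    (X : Set E) (hXcv : Convex ℝ X)
    (f : E → ℝ)
    (d : E → ℝ) (Gd : E → E)
    (hd : ∀ x, HasGradientAt d (Gd x) x)
    (hstrong : ∀ x ∈ X, ∀ y ∈ X, ‖x - y‖ ^ 2 ≤ ⟪Gd x - Gd y, x - y⟫)
    (V : E → E → ℝ) (hV : ∀ x y, V x y = d y - d x - ⟪Gd x, y - x⟫)
    (xi : E) (hxi : xi ∈ X)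
    (gf : E) (hgf : ∀ y ∈ X, f xi + ⟪gf, y - xi⟫ ≤ f y)
    (h : ℝ) (hh : 0 < h)
    (xnext : E) (hxnextX : xnext ∈ X)
    (hxnext : IsMinOn (fun u => ⟪h • gf, u⟫ + V xi u) X xnext) :
    ∀ x ∈ X, h * (f xi - f x) ≤ h ^ 2 / 2 * ‖gf‖ ^ 2 + V xi x - V xnext x := by
  intro x hx
  obtain rfl : V = bregman d Gd := funext fun y => funext (hV y)
  have hopt : 0 ≤ ⟪h • gf + Gd xnext - Gd xi, x - xnext⟫ := inner_gradient_nonneg_of_isMinOn hXcv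
    hxnext (hasGradientAt_inner_add_bregman (hd xnext) (h • gf) xi) hxnextX hx
  have hthree := bregman_sub_bregman_sub_bregman d Gd xi xnext x
  have hbregman := sq_norm_sub_div_two_le_bregman hXcv (fun y _ => hd y) hstrong hxi hxnextX
  have hyoung := real_inner_le_sq_norm_add_sq_norm_div_two (h • gf) (xi - xnext)
  rw [norm_smul, mul_pow, Real.norm_eq_abs, sq_abs, norm_sub_rev] at hyoung
  rw [add_sub_assoc, inner_add_left] at hopt
  calc h * (f xi - f x) ≤ ⟪h • gf, xi - x⟫ := by
        rw [real_inner_smul_left, ← neg_sub x xi, inner_neg_right]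
        exact mul_le_mul_of_nonneg_left (by linarith [hgf x hx]) hh.le
    _ = ⟪h • gf, xi - xnext⟫ - ⟪h • gf, x - xnext⟫ := by
        rw [← inner_sub_right, sub_sub_sub_cancel_right]
    _ ≤ h ^ 2 / 2 * ‖gf‖ ^ 2 + bregman d Gd xi x - bregman d Gd xnext x := by
        linarith

/-- Lemma 1, mirror descent step inequality.
Let `X` be a closed convex set in a real inner product space `E`, `f` convex on `X`,
`d` a continuously differentiable distance generating function (gradient `Gd`) that is
1-strongly convex w.r.t. the norm, with Bregman divergence
`V x y = d y - d x - ⟪Gd x, y - x⟫`.  For `xi ∈ X`, a subgradient `gf` of `f` at `xi`,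
a stepsize `h > 0`, and `xnext = argmin_{u ∈ X} (⟪h • gf, u⟫ + V xi u)`, we have
`h * (f xi - f x) ≤ h^2/2 * ‖gf‖^2 + V xi x - V xnext x` for every `x ∈ X`. -/
theorem mirror_descent_step
    {E : Type*} [NormedAddCommGroup E] [InnerProductSpace ℝ E] [CompleteSpace E]
    (X : Set E) (hXcl : IsClosed X) (hXcv : Convex ℝ X)
    (f : E → ℝ) (hf : ConvexOn ℝ X f)
    (d : E → ℝ) (Gd : E → E)
    (hd : ∀ x, HasGradientAt d (Gd x) x) (hGd : Continuous Gd)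
    (hstrong : ∀ x ∈ X, ∀ y ∈ X, ‖x - y‖ ^ 2 ≤ ⟪Gd x - Gd y, x - y⟫)
    (V : E → E → ℝ) (hV : ∀ x y, V x y = d y - d x - ⟪Gd x, y - x⟫)
    (xi : E) (hxi : xi ∈ X)
    (gf : E) (hgf : ∀ y ∈ X, f xi + ⟪gf, y - xi⟫ ≤ f y)
    (h : ℝ) (hh : 0 < h)
    (xnext : E) (hxnextX : xnext ∈ X)
    (hxnext : IsMinOn (fun u => ⟪h • gf, u⟫ + V xi u) X xnext) :
    ∀ x ∈ X, h * (f xi - f x) ≤ h ^ 2 / 2 * ‖gf‖ ^ 2 + V xi x - V xnext x :=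
  mirror_descent_step_general X hXcv f d Gd hd hstrong V hV xi hxi gf hgf h hh xnext hxnextX hxnext
end

section
/- Let X be a closed convex set in a real inner product space E, let f, g : X → ℝ be convex, let x_* ∈ X satisfy g(x_*) ≤ 0 and minimize f over {x ∈ X : g(x) ≤ 0}, let d be a 1-strongly convex distance generating function with Bregman divergence V, minimized over X at x^0, and suppose d(x_*) ≤ Θ₀². Fix ε > 0 and N ∈ ℕ. Suppose a sequence x^0, x^1, …, x^N in X is generated as follows: for each i < N, if g(x^i) ≤ ε (a 'productive' step, i ∈ I) set M_i = ‖∇f(x^i)‖ for a chosen nonzero subgradient ∇f(x^i) of f, h_i = ε/M_i², and x^{i+1} = argmin_{u∈X}{ ⟨h_i ∇f(x^i), u⟩ + V(x^i,u) }; otherwise (i ∈ J = [N]∖I) set M_i = ‖∇g(x^i)‖ for a chosen nonzero subgradient ∇g(x^i) of g, h_i = ε/M_i², and x^{i+1} = argmin_{u∈X}{ ⟨h_i ∇g(x^i), u⟩ + V(x^i,u) }. If the stopping condition Σ_{i<N} 1/M_i² ≥ 2Θ₀²/ε² holds, then I is nonempty and the weighted average x̄^N = (Σ_{i∈I} h_i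 x^i)/(Σ_{i∈I} h_i) satisfies f(x̄^N) − f(x_*) ≤ ε and g(x̄^N) ≤ ε. -/
/-!
Each mirror step satisfies `⟪h v, x - x⋆⟫ ≤ V(x, x⋆) - V(x⁺, x⋆) + ‖h v‖² / 2`, and with
`h = ε / ‖v‖²` the last term is `ε h / 2`. At a non-productive step the subgradient inequality
gives `⟪v, x - x⋆⟫ ≥ g x - g x⋆ > ε`, so the step decreases `V(·, x⋆)` by more than `ε h / 2`.
The decreases telescope to at most `V(x⁰, x⋆) ≤ d x⋆ ≤ Θ₀²`, while the stopping rule says that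
the budget `∑ ε h / 2` is at least `Θ₀²`. Hence productive steps exist, and on them the decrease
is at most their share `∑_I ε h / 2` of the budget, which gives `∑_I h (f x - f x⋆) ≤ ε ∑_I h`.
Jensen's inequality for the weighted average finishes the proof.
-/

open scoped RealInnerProductSpace
open Finset

section

variable {E : Type*} [NormedAddCommGroup E] [InnerProductSpace ℝ E]

def bregmanDiv (d : E → ℝ) (Gd : E → E) (x y : E) : ℝ := d y - d x - ⟪Gd x, y - x⟫

lemma bregmanDiv_three_point (d : E → ℝ) (Gd : E → E) (a z u : E) :
    bregmanDiv d Gd a u - bregmanDiv d Gd z u - bregmanDiv d Gd a z = ⟪Gd z - Gd a, u - z⟫ := by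
  simp only [bregmanDiv, inner_sub_left, inner_sub_right]
  ring

lemma sub_le_inner_sub_of_le {φ : E → ℝ} {v a u : E} (h : φ a + ⟪v, u - a⟫ ≤ φ u) :
    φ a - φ u ≤ ⟪v, a - u⟫ := by
  rw [← neg_sub, inner_neg_right] at h
  linarith

variable [CompleteSpace E] {X : Set E} {d : E → ℝ} {Gd : E → E}

lemma HasGradientAt.hasDerivAt_comp_add_smul_s1 {φ : E → ℝ} {G z w : E} {t : ℝ}
    (hφ : HasGradientAt φ G (z + t • w)) :
    HasDerivAt (fun s : ℝ => φ (z + s • w)) ⟪G, w⟫ t := by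
  have hline : HasDerivAt (fun s : ℝ => z + s • w) w t := by
    simpa using ((hasDerivAt_id t).smul_const w).const_add z
  simpa [InnerProductSpace.toDual_apply_apply, Function.comp_def] using
    hφ.hasFDerivAt.comp_hasDerivAt t hline

lemma IsMinOn.inner_gradient_nonneg (hX : Convex ℝ X) {φ : E → ℝ} {G z u : E}
    (hmin : IsMinOn φ X z) (hφ : HasGradientAt φ G z) (hz : z ∈ X) (hu : u ∈ X) :
    0 ≤ ⟪G, u - z⟫ := by
  simpa [InnerProductSpace.toDual_apply_apply] using
    hmin.localize.hasFDerivWithinAt_nonneg hφ.hasFDerivAt.hasFDerivWithinAt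
      (sub_mem_posTangentConeAt_of_segment_subset (hX.segment_subset hz hu))

lemma hasGradientAt_inner_add_bregmanDiv {u : E} (hd : HasGradientAt d (Gd u) u) (w a : E) :
    HasGradientAt (fun p => ⟪w, p⟫ + bregmanDiv d Gd a p) (w + (Gd u - Gd a)) u := by
  have hinner (c : E) : HasFDerivAt (fun p => ⟪c, p⟫) (InnerProductSpace.toDual ℝ E c) u :=
    (InnerProductSpace.toDual ℝ E c).hasFDerivAt
  have hsplit : (fun p => ⟪w, p⟫ + bregmanDiv d Gd a p)
      = fun p => ⟪w, p⟫ + ((d p - d a) - (⟪Gd a, p⟫ - ⟪Gd a, a⟫)) := by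
    simp only [bregmanDiv, inner_sub_right]
  rw [hasGradientAt_iff_hasFDerivAt] at hd ⊢
  rw [hsplit]
  exact ((hinner w).add ((hd.sub_const (d a)).sub ((hinner (Gd a)).sub_const _))).congr_fderiv
    (by simp only [map_add, map_sub])

lemma sq_norm_sub_div_two_le_bregmanDiv (hX : Convex ℝ X)
    (hd : ∀ p ∈ X, HasGradientAt d (Gd p) p)
    (hstrong : ∀ p ∈ X, ∀ q ∈ X, ‖p - q‖ ^ 2 ≤ ⟪Gd p - Gd q, p - q⟫)
    {x y : E} (hx : x ∈ X) (hy : y ∈ X) :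
    ‖y - x‖ ^ 2 / 2 ≤ bregmanDiv d Gd x y := by
  set c := ‖y - x‖ ^ 2
  set F : ℝ → ℝ := fun t => d (x + t • (y - x)) - t * ⟪Gd x, y - x⟫ - t ^ 2 / 2 * c
  have hF (t : ℝ) (ht : t ∈ Set.Icc 0 1) :
      HasDerivAt F (⟪Gd (x + t • (y - x)) - Gd x, y - x⟫ - t * c) t := by
    refine (((hd _ (hX.add_smul_sub_mem hx hy ht)).hasDerivAt_comp_add_smul_s1.sub
      ((hasDerivAt_id t).mul_const ⟪Gd x, y - x⟫)).sub
      (((hasDerivAt_pow 2 t).div_const 2).mul_const c)).congr_deriv ?_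
    rw [inner_sub_left]
    push_cast
    ring
  have hmono : MonotoneOn F (Set.Icc 0 1) := by
    refine monotoneOn_of_hasDerivWithinAt_nonneg (convex_Icc 0 1)
      (fun t ht => (hF t ht).continuousAt.continuousWithinAt)
      (fun t ht => (hF t (interior_subset ht)).hasDerivWithinAt) fun t ht => ?_
    rw [interior_Icc] at ht
    -- strong monotonicity at `x + t • (y - x)` and `x`, divided by `t > 0`
    have hmon := hstrong _ (hX.add_smul_sub_mem hx hy (Set.Ioo_subset_Icc_self ht)) x hx
    rw [add_sub_cancel_left, norm_smul, inner_smul_right, mul_pow, Real.norm_eq_abs,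
      sq_abs] at hmon
    have : t * (t * c) ≤ t * ⟪Gd (x + t • (y - x)) - Gd x, y - x⟫ := by linarith
    linarith [le_of_mul_le_mul_left this ht.1]
  have hF0 : F 0 = d x := by simp [F]
  have hF1 : F 1 = d y - ⟪Gd x, y - x⟫ - c / 2 := by simp [F, div_eq_inv_mul]
  have := hmono (Set.left_mem_Icc.2 zero_le_one) (Set.right_mem_Icc.2 zero_le_one) zero_le_one
  rw [hF0, hF1] at this
  unfold bregmanDiv
  linarith

lemma bregmanDiv_nonneg (hX : Convex ℝ X) (hd : ∀ p ∈ X, HasGradientAt d (Gd p) p)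
    (hstrong : ∀ p ∈ X, ∀ q ∈ X, ‖p - q‖ ^ 2 ≤ ⟪Gd p - Gd q, p - q⟫)
    {x y : E} (hx : x ∈ X) (hy : y ∈ X) :
    0 ≤ bregmanDiv d Gd x y :=
  (div_nonneg (sq_nonneg ‖y - x‖) zero_le_two).trans
    (sq_norm_sub_div_two_le_bregmanDiv hX hd hstrong hx hy)

lemma IsMinOn.bregmanDiv_le (hX : Convex ℝ X) {x y : E} (hmin : IsMinOn d X x)
    (hd : HasGradientAt d (Gd x) x) (hx : x ∈ X) (hy : y ∈ X) :
    bregmanDiv d Gd x y ≤ d y - d x := by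
  have := hmin.inner_gradient_nonneg hX hd hx hy
  unfold bregmanDiv
  linarith

lemma IsMinOn.sum_range_bregmanDiv_sub_le (hX : Convex ℝ X)
    (hd : ∀ p ∈ X, HasGradientAt d (Gd p) p)
    (hstrong : ∀ p ∈ X, ∀ q ∈ X, ‖p - q‖ ^ 2 ≤ ⟪Gd p - Gd q, p - q⟫) {x : ℕ → E} {u : E}
    {N : ℕ} (hmin : IsMinOn d X (x 0)) (hx₀ : x 0 ∈ X) (hxN : x N ∈ X) (hu : u ∈ X) :
    ∑ i ∈ range N, (bregmanDiv d Gd (x i) u - bregmanDiv d Gd (x (i + 1)) u)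
      ≤ d u - d (x 0) := by
  rw [sum_range_sub']
  linarith [bregmanDiv_nonneg hX hd hstrong hxN hu, hmin.bregmanDiv_le hX (hd _ hx₀) hx₀ hu]

lemma IsMinOn.inner_sub_le_bregmanDiv_sub (hX : Convex ℝ X)
    (hd : ∀ p ∈ X, HasGradientAt d (Gd p) p)
    (hstrong : ∀ p ∈ X, ∀ q ∈ X, ‖p - q‖ ^ 2 ≤ ⟪Gd p - Gd q, p - q⟫) {w a z u : E}
    (hmin : IsMinOn (fun p => ⟪w, p⟫ + bregmanDiv d Gd a p) X z)
    (ha : a ∈ X) (hz : z ∈ X) (hu : u ∈ X) :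
    ⟪w, a - u⟫ ≤ bregmanDiv d Gd a u - bregmanDiv d Gd z u + ‖w‖ ^ 2 / 2 := by
  have hopt := hmin.inner_gradient_nonneg hX (hasGradientAt_inner_add_bregmanDiv (hd z hz) w a)
    hz hu
  rw [inner_add_left] at hopt
  have hthree := bregmanDiv_three_point d Gd a z u
  have hstep := sq_norm_sub_div_two_le_bregmanDiv hX hd hstrong ha hz
  have hyoung : ⟪w, a - z⟫ ≤ ‖w‖ ^ 2 / 2 + ‖z - a‖ ^ 2 / 2 := by
    have := real_inner_le_norm w (a - z)
    rw [norm_sub_rev] at this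
    nlinarith [sq_nonneg (‖w‖ - ‖z - a‖)]
  have hsplit : ⟪w, a - u⟫ = ⟪w, a - z⟫ - ⟪w, u - z⟫ := by
    rw [← inner_sub_right, sub_sub_sub_cancel_right]
  linarith

lemma IsMinOn.mul_inner_sub_le_bregmanDiv_sub (hX : Convex ℝ X)
    (hd : ∀ p ∈ X, HasGradientAt d (Gd p) p)
    (hstrong : ∀ p ∈ X, ∀ q ∈ X, ‖p - q‖ ^ 2 ≤ ⟪Gd p - Gd q, p - q⟫) {w a z u : E} {η ε : ℝ}
    (hmin : IsMinOn (fun p => ⟪η • w, p⟫ + bregmanDiv d Gd a p) X z) (hη : η * ‖w‖ ^ 2 = ε)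
    (ha : a ∈ X) (hz : z ∈ X) (hu : u ∈ X) :
    η * ⟪w, a - u⟫ ≤ bregmanDiv d Gd a u - bregmanDiv d Gd z u + ε * η / 2 := by
  have := hmin.inner_sub_le_bregmanDiv_sub hX hd hstrong ha hz hu
  have hnorm : ‖η • w‖ ^ 2 = ε * η := by
    rw [norm_smul, mul_pow, Real.norm_eq_abs, sq_abs, ← hη]
    ring
  rwa [real_inner_smul_left, hnorm] at this

end

namespace Finset

variable {ι M : Type*} [AddCommGroup M] [PartialOrder M] [IsOrderedAddMonoid M]
  {s : Finset ι} {p : ι → Prop} [DecidablePred p]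

lemma sum_filter_le_sum_filter_of_sum_le {a b : ι → M} (hab : ∑ i ∈ s, a i ≤ ∑ i ∈ s, b i)
    (hba : ∀ i ∈ s, ¬ p i → b i ≤ a i) :
    ∑ i ∈ s with p i, a i ≤ ∑ i ∈ s with p i, b i := by
  have hrest : ∑ i ∈ s with ¬ p i, b i ≤ ∑ i ∈ s with ¬ p i, a i :=
    sum_le_sum fun i hi => hba i (mem_filter.1 hi).1 (mem_filter.1 hi).2
  rw [← sum_filter_add_sum_filter_not s p a, ← sum_filter_add_sum_filter_not s p b] at hab
  exact le_of_add_le_add_right (hab.trans (add_le_add_right hrest _))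

lemma filter_nonempty_of_sum_le {a b : ι → M} (hs : s.Nonempty)
    (hab : ∑ i ∈ s, a i ≤ ∑ i ∈ s, b i) (hba : ∀ i ∈ s, ¬ p i → b i < a i) :
    (s.filter p).Nonempty := by
  by_contra hempty
  have hnp : ∀ i ∈ s, ¬ p i := fun i hi hpi => hempty ⟨i, mem_filter.2 ⟨hi, hpi⟩⟩
  exact (sum_lt_sum_of_nonempty hs fun i hi => hba i hi (hnp i hi)).not_ge hab

-- `D i` is the decrease of a potential at step `i` and `ε * h i / 2` is that step's share of a
-- budget; steps outside `p` overspend their share, so some step lies in `p`.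
lemma filter_nonempty_and_sum_filter_mul_sub_nonpos (hs : s.Nonempty) {h c D : ι → ℝ} {ε : ℝ}
    (hh : ∀ i ∈ s, 0 < h i) (hstep : ∀ i ∈ s, h i * c i ≤ D i + ε * h i / 2)
    (hbad : ∀ i ∈ s, ¬ p i → ε < c i) (hD : ∑ i ∈ s, D i ≤ ∑ i ∈ s, ε * h i / 2) :
    (s.filter p).Nonempty ∧ ∑ i ∈ s with p i, h i * (c i - ε) ≤ 0 := by
  have hover : ∀ i ∈ s, ¬ p i → ε * h i / 2 < D i := fun i hi hpi => by
    linarith [mul_lt_mul_of_pos_left (hbad i hi hpi) (hh i hi), hstep i hi]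
  refine ⟨filter_nonempty_of_sum_le hs hD hover, ?_⟩
  calc ∑ i ∈ s with p i, h i * (c i - ε)
      ≤ ∑ i ∈ s with p i, (D i - ε * h i / 2) :=
        sum_le_sum fun i hi => by linarith [hstep i (mem_filter.1 hi).1]
    _ = ∑ i ∈ s with p i, D i - ∑ i ∈ s with p i, ε * h i / 2 := sum_sub_distrib _ _
    _ ≤ 0 := sub_nonpos.2 <| sum_filter_le_sum_filter_of_sum_le hD fun i hi hpi =>
        (hover i hi hpi).le

end Finset

lemma ConvexOn.map_centerMass_le_of_sum_mul_sub_nonpos {E ι : Type*} [AddCommGroup E]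
    [Module ℝ E] {X : Set E} {f : E → ℝ} (hf : ConvexOn ℝ X f) {t : Finset ι} {w : ι → ℝ}
    {p : ι → E} {c : ℝ} (hw₀ : ∀ i ∈ t, 0 ≤ w i) (hw : 0 < ∑ i ∈ t, w i)
    (hp : ∀ i ∈ t, p i ∈ X) (hc : ∑ i ∈ t, w i * (f (p i) - c) ≤ 0) :
    f (t.centerMass w p) ≤ c := by
  refine (hf.map_centerMass_le hw₀ hw hp).trans ?_
  rw [centerMass, smul_eq_mul, inv_mul_le_iff₀ hw]
  simp only [mul_sub, sum_sub_distrib, ← sum_mul] at hc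
  simpa [mul_comm] using hc

theorem adaptive_mirror_descent_constrained_general
    {E : Type*} [NormedAddCommGroup E] [InnerProductSpace ℝ E] [CompleteSpace E]
    (X : Set E) (hXcv : Convex ℝ X)
    (f g : E → ℝ) (hf : ConvexOn ℝ X f) (hg : ConvexOn ℝ X g)
    (xstar : E) (hxstarX : xstar ∈ X) (hxstarg : g xstar ≤ 0)
    (d : E → ℝ) (Gd : E → E)
    (hd : ∀ x, HasGradientAt d (Gd x) x)
    (hstrong : ∀ x ∈ X, ∀ y ∈ X, ‖x - y‖ ^ 2 ≤ ⟪Gd x - Gd y, x - y⟫)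
    (V : E → E → ℝ) (hV : ∀ x y, V x y = d y - d x - ⟪Gd x, y - x⟫)
    (Θ₀ : ℝ) (hΘpos : 0 < Θ₀) (hΘ : d xstar ≤ Θ₀ ^ 2)
    (ε : ℝ) (hε : 0 < ε) (N : ℕ)
    (x : ℕ → E) (hxX : ∀ i, x i ∈ X)
    (hx0 : IsMinOn d X (x 0)) (hd0 : 0 ≤ d (x 0))
    (v : ℕ → E) (M h : ℕ → ℝ)
    (hM : ∀ i, M i = ‖v i‖) (hh : ∀ i, h i = ε / M i ^ 2)
    (hvne : ∀ i < N, v i ≠ 0)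
    (hprod : ∀ i < N, g (x i) ≤ ε → ∀ y ∈ X, f (x i) + ⟪v i, y - x i⟫ ≤ f y)
    (hnonprod : ∀ i < N, ε < g (x i) → ∀ y ∈ X, g (x i) + ⟪v i, y - x i⟫ ≤ g y)
    (hstep : ∀ i < N,
      IsMinOn (fun u => ⟪h i • v i, u⟫ + V (x i) u) X (x (i + 1)))
    (hstop : 2 * Θ₀ ^ 2 / ε ^ 2 ≤ ∑ i ∈ Finset.range N, 1 / M i ^ 2) :
    letI I := (Finset.range N).filter fun i => g (x i) ≤ ε
    letI xbar := (∑ i ∈ I, h i)⁻¹ • ∑ i ∈ I, h i • x i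
    I.Nonempty ∧ f xbar - f xstar ≤ ε ∧ g xbar ≤ ε := by
  obtain rfl : V = bregmanDiv d Gd := funext fun y => funext (hV y)
  set I := (range N).filter fun i => g (x i) ≤ ε
  have hdX : ∀ p ∈ X, HasGradientAt d (Gd p) p := fun p _ => hd p
  have hv (i : ℕ) (hi : i ∈ range N) : 0 < ‖v i‖ := norm_pos_iff.2 (hvne i (mem_range.1 hi))
  have hh_pos (i : ℕ) (hi : i ∈ range N) : 0 < h i := by
    rw [hh, hM]
    exact div_pos hε (pow_pos (hv i hi) 2)
  have hstep_le : ∀ i ∈ range N, h i * ⟪v i, x i - xstar⟫ ≤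
      bregmanDiv d Gd (x i) xstar - bregmanDiv d Gd (x (i + 1)) xstar + ε * h i / 2 :=
    fun i hi => (hstep i (mem_range.1 hi)).mul_inner_sub_le_bregmanDiv_sub hXcv hdX hstrong
      (by rw [hh, hM, div_mul_cancel₀ _ (pow_pos (hv i hi) 2).ne']) (hxX i) (hxX (i + 1)) hxstarX
  have hbad (i : ℕ) (hi : i ∈ range N) (hgi : ¬ g (x i) ≤ ε) : ε < ⟪v i, x i - xstar⟫ := by
    linarith [sub_le_inner_sub_of_le (hnonprod i (mem_range.1 hi) (not_le.1 hgi) xstar hxstarX)]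
  have htotal := calc
    ∑ i ∈ range N, (bregmanDiv d Gd (x i) xstar - bregmanDiv d Gd (x (i + 1)) xstar)
      ≤ d xstar - d (x 0) :=
        hx0.sum_range_bregmanDiv_sub_le hXcv hdX hstrong (hxX 0) (hxX N) hxstarX
    _ ≤ ε ^ 2 / 2 * (2 * Θ₀ ^ 2 / ε ^ 2) := by field_simp; linarith
    _ ≤ ε ^ 2 / 2 * ∑ i ∈ range N, 1 / M i ^ 2 := by gcongr
    _ = ∑ i ∈ range N, ε * h i / 2 := by
      rw [mul_sum]
      exact sum_congr rfl fun i _ => by rw [hh]; ring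
  have hN : (range N).Nonempty :=
    nonempty_of_sum_ne_zero (f := fun i => 1 / M i ^ 2) (hstop.trans_lt' (by positivity)).ne'
  obtain ⟨hI, hacc⟩ := filter_nonempty_and_sum_filter_mul_sub_nonpos hN hh_pos hstep_le hbad htotal
  have hw₀ : ∀ i ∈ I, 0 ≤ h i := fun i hi => (hh_pos i (mem_filter.1 hi).1).le
  have hw : 0 < ∑ i ∈ I, h i := sum_pos (fun i hi => hh_pos i (mem_filter.1 hi).1) hI
  refine ⟨hI, sub_le_iff_le_add'.2 ?_, ?_⟩
  · refine hf.map_centerMass_le_of_sum_mul_sub_nonpos hw₀ hw (fun i _ => hxX i) (hacc.trans' ?_)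
    refine sum_le_sum fun i hi => mul_le_mul_of_nonneg_left ?_ (hw₀ i hi)
    obtain ⟨hiN, hgi⟩ := mem_filter.1 hi
    linarith [sub_le_inner_sub_of_le (hprod i (mem_range.1 hiN) hgi xstar hxstarX)]
  · refine hg.map_centerMass_le_of_sum_mul_sub_nonpos hw₀ hw (fun i _ => hxX i) ?_
    exact sum_nonpos fun i hi =>
      mul_nonpos_of_nonneg_of_nonpos (hw₀ i hi) (sub_nonpos.2 (mem_filter.1 hi).2)

/-- Theorem 1: adaptive constrained Mirror Descent, convex case.
Given convex `f, g` on a closed convex set `X`, a solution `xstar` of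
`min {f x : x ∈ X, g x ≤ 0}`, a 1-strongly convex d.g.f. `d` (gradient `Gd`,
Bregman divergence `V`) minimized over `X` at `x 0` with `d xstar ≤ Θ₀²`, and the
adaptive MD iterates: at productive steps (`g (x i) ≤ ε`, the set `I`) we step along
a nonzero subgradient `v i` of `f`, otherwise along a nonzero subgradient `v i` of `g`,
with `M i = ‖v i‖`, `h i = ε / M i ^ 2`, and mirror updates.  If the stopping rule
`∑_{i<N} 1 / M i ^ 2 ≥ 2 Θ₀² / ε²` holds, then `I` is nonempty and the weighted average
`x̄ = (∑_{i∈I} h i)⁻¹ • ∑_{i∈I} h i • x i` satisfies `f x̄ - f xstar ≤ ε` and `g x̄ ≤ ε`. -/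
theorem adaptive_mirror_descent_constrained
    {E : Type*} [NormedAddCommGroup E] [InnerProductSpace ℝ E] [CompleteSpace E]
    (X : Set E) (hXcl : IsClosed X) (hXcv : Convex ℝ X)
    (f g : E → ℝ) (hf : ConvexOn ℝ X f) (hg : ConvexOn ℝ X g)
    (xstar : E) (hxstarX : xstar ∈ X) (hxstarg : g xstar ≤ 0)
    (hxstaropt : ∀ y ∈ X, g y ≤ 0 → f xstar ≤ f y)
    (d : E → ℝ) (Gd : E → E)
    (hd : ∀ x, HasGradientAt d (Gd x) x) (hGd : Continuous Gd)
    (hstrong : ∀ x ∈ X, ∀ y ∈ X, ‖x - y‖ ^ 2 ≤ ⟪Gd x - Gd y, x - y⟫)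
    (V : E → E → ℝ) (hV : ∀ x y, V x y = d y - d x - ⟪Gd x, y - x⟫)
    (Θ₀ : ℝ) (hΘpos : 0 < Θ₀) (hΘ : d xstar ≤ Θ₀ ^ 2)
    (ε : ℝ) (hε : 0 < ε) (N : ℕ)
    (x : ℕ → E) (hxX : ∀ i, x i ∈ X)
    (hx0 : IsMinOn d X (x 0)) (hd0 : 0 ≤ d (x 0))
    (v : ℕ → E) (M h : ℕ → ℝ)
    (hM : ∀ i, M i = ‖v i‖) (hh : ∀ i, h i = ε / M i ^ 2)
    (hvne : ∀ i < N, v i ≠ 0)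
    (hprod : ∀ i < N, g (x i) ≤ ε → ∀ y ∈ X, f (x i) + ⟪v i, y - x i⟫ ≤ f y)
    (hnonprod : ∀ i < N, ε < g (x i) → ∀ y ∈ X, g (x i) + ⟪v i, y - x i⟫ ≤ g y)
    (hstep : ∀ i < N,
      IsMinOn (fun u => ⟪h i • v i, u⟫ + V (x i) u) X (x (i + 1)))
    (hstop : 2 * Θ₀ ^ 2 / ε ^ 2 ≤ ∑ i ∈ Finset.range N, 1 / M i ^ 2) :
    letI I := (Finset.range N).filter fun i => g (x i) ≤ ε
    letI xbar := (∑ i ∈ I, h i)⁻¹ • ∑ i ∈ I, h i • x i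
    I.Nonempty ∧ f xbar - f xstar ≤ ε ∧ g xbar ≤ ε :=
  adaptive_mirror_descent_constrained_general X hXcv f g hf hg xstar hxstarX hxstarg d Gd hd hstrong
    V hV Θ₀ hΘpos hΘ ε hε N x hxX hx0 hd0 v M h hM hh hvne hprod hnonprod hstep hstop
end

section
/- Let X be a closed convex set in a real inner product space, let f, g : X → ℝ be μ-strongly convex with respect to the norm ‖·‖ (with μ > 0), and let x_* ∈ X satisfy g(x_*) ≤ 0 and minimize f over {x ∈ X : g(x) ≤ 0}. If a point x ∈ X satisfies f(x) − f(x_*) ≤ ε and g(x) ≤ ε for some ε > 0, then (μ/2) ‖x − x_*‖² ≤ ε. -/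
/-!
Move from `x` towards `xstar` along `z_t = t • x + (1 - t) • xstar` and write
`D = μ / 2 * ‖x - xstar‖ ^ 2`. Strong convexity bounds both `g z_t` and `f z_t - f xstar` by
`t * (ε - (1 - t) * D)`. If `z_t` is feasible, optimality of `xstar` makes this bound nonnegative;
if not, `g z_t > 0` does. Hence `(1 - t) * D ≤ ε` for every `t ∈ (0, 1]`, and `t → 0` gives `D ≤ ε`.
-/

open Filter Topology

section

variable {E : Type*} [NormedAddCommGroup E] [NormedSpace ℝ E] {s : Set E} {μ ε : ℝ}
  {f g : E → ℝ} {x y : E}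

theorem StrongConvexOn.apply_add_one_sub_smul_le (hf : StrongConvexOn s μ f) (hx : x ∈ s)
    (hy : y ∈ s) {t : ℝ} (ht0 : 0 ≤ t) (ht1 : t ≤ 1) :
    f (t • x + (1 - t) • y) ≤ t * f x + (1 - t) * f y - t * (1 - t) * (μ / 2 * ‖x - y‖ ^ 2) :=
  hf.2 hx hy ht0 (sub_nonneg.2 ht1) (add_sub_cancel t 1)

theorem StrongConvexOn.one_sub_mul_le_of_approx_optimal (hf : StrongConvexOn s μ f)
    (hg : StrongConvexOn s μ g) (hx : x ∈ s) (hy : y ∈ s) (hgy : g y ≤ 0)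
    (hopt : ∀ z ∈ s, g z ≤ 0 → f y ≤ f z) (hfx : f x - f y ≤ ε) (hgx : g x ≤ ε)
    {t : ℝ} (ht0 : 0 < t) (ht1 : t ≤ 1) :
    (1 - t) * (μ / 2 * ‖x - y‖ ^ 2) ≤ ε := by
  have hg_seg := hg.apply_add_one_sub_smul_le hx hy ht0.le ht1
  have hf_seg := hf.apply_add_one_sub_smul_le hx hy ht0.le ht1
  have hzs := hf.1 hx hy ht0.le (sub_nonneg.2 ht1) (add_sub_cancel t 1)
  set D := μ / 2 * ‖x - y‖ ^ 2
  set z := t • x + (1 - t) • y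
  have hgz : g z ≤ t * (ε - (1 - t) * D) := by
    linarith [mul_le_mul_of_nonneg_left hgx ht0.le,
      mul_nonpos_of_nonneg_of_nonpos (sub_nonneg.2 ht1) hgy]
  have hfz : f z - f y ≤ t * (ε - (1 - t) * D) := by
    linarith [mul_le_mul_of_nonneg_left hfx ht0.le]
  have hbound : 0 ≤ t * (ε - (1 - t) * D) := by
    by_cases hz : g z ≤ 0
    · linarith [hopt z hzs hz]
    · linarith
  linarith [nonneg_of_mul_nonneg_right hbound ht0]

end

theorem strongly_convex_argument_convergence_general
    {E : Type*} [NormedAddCommGroup E] [InnerProductSpace ℝ E]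
    (X : Set E)
    (μ : ℝ)
    (f g : E → ℝ) (hf : StrongConvexOn X μ f) (hg : StrongConvexOn X μ g)
    (xstar : E) (hxstarX : xstar ∈ X) (hxstarg : g xstar ≤ 0)
    (hxstaropt : ∀ y ∈ X, g y ≤ 0 → f xstar ≤ f y)
    (ε : ℝ)
    (x : E) (hxX : x ∈ X) (hfx : f x - f xstar ≤ ε) (hgx : g x ≤ ε) :
    μ / 2 * ‖x - xstar‖ ^ 2 ≤ ε := by
  set D := μ / 2 * ‖x - xstar‖ ^ 2
  have hlim : Tendsto (fun t : ℝ ↦ (1 - t) * D) (𝓝[>] 0) (𝓝 D) := by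
    have : Continuous fun t : ℝ ↦ (1 - t) * D := by fun_prop
    simpa using (this.tendsto 0).mono_left nhdsWithin_le_nhds
  refine le_of_tendsto hlim ?_
  filter_upwards [Ioc_mem_nhdsGT one_pos] with t ht
  exact hf.one_sub_mul_le_of_approx_optimal hg hxX hxstarX hxstarg hxstaropt hfx hgx ht.1 ht.2

/-- Lemma 2.  Let `X` be a closed convex set in a real inner product
space, `f, g : X → ℝ` be `μ`-strongly convex (`μ > 0`), and `xstar ∈ X` satisfy
`g xstar ≤ 0` and minimize `f` over `{x ∈ X : g x ≤ 0}`.  If `x ∈ X` satisfies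
`f x - f xstar ≤ ε` and `g x ≤ ε` for some `ε > 0`, then `μ/2 * ‖x - xstar‖² ≤ ε`. -/
theorem strongly_convex_argument_convergence
    {E : Type*} [NormedAddCommGroup E] [InnerProductSpace ℝ E]
    (X : Set E) (hXcl : IsClosed X) (hXcv : Convex ℝ X)
    (μ : ℝ) (hμ : 0 < μ)
    (f g : E → ℝ) (hf : StrongConvexOn X μ f) (hg : StrongConvexOn X μ g)
    (xstar : E) (hxstarX : xstar ∈ X) (hxstarg : g xstar ≤ 0)
    (hxstaropt : ∀ y ∈ X, g y ≤ 0 → f xstar ≤ f y)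
    (ε : ℝ) (hε : 0 < ε)
    (x : E) (hxX : x ∈ X) (hfx : f x - f xstar ≤ ε) (hgx : g x ≤ ε) :
    μ / 2 * ‖x - xstar‖ ^ 2 ≤ ε :=
  strongly_convex_argument_convergence_general X μ f g hf hg xstar hxstarX hxstarg hxstaropt ε x hxX
    hfx hgx
end

section
/- Let X be a closed convex set in a real inner product space, let f, g : X → ℝ be μ-strongly convex (μ > 0), and let x_* ∈ X satisfy g(x_*) ≤ 0 and minimize f over {x ∈ X : g(x) ≤ 0}. If the adaptive constrained Mirror Descent algorithm output x̄ satisfies f(x̄) − f(x_*) ≤ ε and g(x̄) ≤ ε, then the argument also converges: ‖x̄ − x_*‖ ≤ sqrt(2ε/μ). -/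
/-!
Put `z = t • x + (1 - t) • xstar` with `t ∈ (0, 1]`. Strong convexity of `g` and `f` gives
`g z ≤ t (ε - (1 - t) μ/2 ‖x - xstar‖²)` and the same bound for `f z - f xstar`. If the gain
`(1 - t) μ/2 ‖x - xstar‖²` exceeded `ε`, the point `z` would be feasible with `f z < f xstar`,
contradicting optimality; letting `t → 0` gives `μ/2 ‖x - xstar‖² ≤ ε`.
-/

open Filter Topology

section StrongConvexity

variable {E : Type*} [NormedAddCommGroup E] [NormedSpace ℝ E] {X : Set E} {μ : ℝ} {f g : E → ℝ}

lemma StrongConvexOn.apply_convex_combination_le (hf : StrongConvexOn X μ f) {x y : E}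
    (hx : x ∈ X) (hy : y ∈ X) {t : ℝ} (ht0 : 0 ≤ t) (ht1 : t ≤ 1) :
    f (t • x + (1 - t) • y) ≤ f y + t * (f x - f y - (1 - t) * (μ / 2 * ‖x - y‖ ^ 2)) := by
  have := hf.2 hx hy ht0 (sub_nonneg.2 ht1) (add_sub_cancel t 1)
  simp only [smul_eq_mul] at this
  linarith

variable {xstar x : E} {ε : ℝ}

lemma StrongConvexOn.one_sub_mul_sq_norm_sub_le_of_isConstrainedMin
    (hf : StrongConvexOn X μ f) (hg : StrongConvexOn X μ g)
    (hxstarX : xstar ∈ X) (hxstarg : g xstar ≤ 0)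
    (hxstaropt : ∀ y ∈ X, g y ≤ 0 → f xstar ≤ f y)
    (hxX : x ∈ X) (hfx : f x - f xstar ≤ ε) (hgx : g x ≤ ε) {t : ℝ} (ht0 : 0 < t) (ht1 : t ≤ 1) :
    (1 - t) * (μ / 2 * ‖x - xstar‖ ^ 2) ≤ ε := by
  by_contra! hgain
  have hz : t • x + (1 - t) • xstar ∈ X := hf.1 hxX hxstarX ht0.le (sub_nonneg.2 ht1) (by ring)
  have hfz := hf.apply_convex_combination_le hxX hxstarX ht0.le ht1
  have hgz := hg.apply_convex_combination_le hxX hxstarX ht0.le ht1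
  have hfeas : g (t • x + (1 - t) • xstar) ≤ 0 := by nlinarith
  have := hxstaropt _ hz hfeas
  nlinarith

lemma StrongConvexOn.sq_norm_sub_le_of_isConstrainedMin
    (hf : StrongConvexOn X μ f) (hg : StrongConvexOn X μ g)
    (hxstarX : xstar ∈ X) (hxstarg : g xstar ≤ 0)
    (hxstaropt : ∀ y ∈ X, g y ≤ 0 → f xstar ≤ f y)
    (hxX : x ∈ X) (hfx : f x - f xstar ≤ ε) (hgx : g x ≤ ε) :
    μ / 2 * ‖x - xstar‖ ^ 2 ≤ ε := by
  have hlim : Tendsto (fun t : ℝ ↦ (1 - t) * (μ / 2 * ‖x - xstar‖ ^ 2)) (𝓝[>] 0)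
      (𝓝 (μ / 2 * ‖x - xstar‖ ^ 2)) := by
    refine tendsto_nhdsWithin_of_tendsto_nhds ?_
    convert ((continuous_const.sub continuous_id).mul continuous_const).tendsto
      (f := fun t : ℝ ↦ (1 - t) * (μ / 2 * ‖x - xstar‖ ^ 2)) 0 using 2
    simp
  refine le_of_tendsto hlim (mem_of_superset (Ioc_mem_nhdsGT one_pos) fun t ht ↦ ?_)
  exact hf.one_sub_mul_sq_norm_sub_le_of_isConstrainedMin hg hxstarX hxstarg hxstaropt hxX hfx hgx
    ht.1 ht.2

end StrongConvexity

theorem md_output_argument_convergence_general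
    {E : Type*} [NormedAddCommGroup E] [InnerProductSpace ℝ E]
    (X : Set E)
    (μ : ℝ) (hμ : 0 < μ)
    (f g : E → ℝ) (hf : StrongConvexOn X μ f) (hg : StrongConvexOn X μ g)
    (xstar : E) (hxstarX : xstar ∈ X) (hxstarg : g xstar ≤ 0)
    (hxstaropt : ∀ y ∈ X, g y ≤ 0 → f xstar ≤ f y)
    (ε : ℝ)
    (x : E) (hxX : x ∈ X) (hfx : f x - f xstar ≤ ε) (hgx : g x ≤ ε) :
    ‖x - xstar‖ ≤ Real.sqrt (2 * ε / μ) := by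
  have hgain := hf.sq_norm_sub_le_of_isConstrainedMin hg hxstarX hxstarg hxstaropt hxX hfx hgx
  refine Real.le_sqrt_of_sq_le ?_
  rw [le_div_iff₀ hμ]
  linarith

/-- convergence of the argument for the strongly convex case.
Let `X` be closed convex, `f, g` be `μ`-strongly convex (`μ > 0`), and `xstar`
solve `min {f x : x ∈ X, g x ≤ 0}`.  If the adaptive constrained Mirror Descent
output `x` satisfies `f x - f xstar ≤ ε` and `g x ≤ ε`, then
`‖x - xstar‖ ≤ √(2ε/μ)`. -/
theorem md_output_argument_convergence
    {E : Type*} [NormedAddCommGroup E] [InnerProductSpace ℝ E]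
    (X : Set E) (hXcl : IsClosed X) (hXcv : Convex ℝ X)
    (μ : ℝ) (hμ : 0 < μ)
    (f g : E → ℝ) (hf : StrongConvexOn X μ f) (hg : StrongConvexOn X μ g)
    (xstar : E) (hxstarX : xstar ∈ X) (hxstarg : g xstar ≤ 0)
    (hxstaropt : ∀ y ∈ X, g y ≤ 0 → f xstar ≤ f y)
    (ε : ℝ) (hε : 0 < ε)
    (x : E) (hxX : x ∈ X) (hfx : f x - f xstar ≤ ε) (hgx : g x ≤ ε) :
    ‖x - xstar‖ ≤ Real.sqrt (2 * ε / μ) :=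
  md_output_argument_convergence_general X μ hμ f g hf hg xstar hxstarX hxstarg hxstaropt ε x hxX
    hfx hgx
end
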